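/- Let α be irrational. If {q'α} and {q''α} are neighboring points in the partition A_k(α) with both in (0,1−α) or both in (1−α,1), then the intersection J_k(q') ∩ J_k(q'') contains a special interval of the form J_{k+8}(q) for some 1 ≤ q ≤ q_{k+9} − 2. -/

import Mathlib

/-!
Write `ε_n = q_nα - p_n`, so `|ε_n| = ‖q_nα‖`; the signs of the `ε_n` alternate and
`|ε_{n+1}| + |ε_{n+2}| ≤ |ε_n|`, hence `‖q_{k+2}α‖ ≥ 8‖q_{k+7}α‖`. By the best approximation
property, `d*, d** ≥ ‖q_kα‖`. Adding the index realising `d**` to `q'` (and subtracting `q_{k+1}`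
if it leaves the range) produces a point of `A_k(α)` in `({q'α}, {q'α} + d** + ‖q_{k+1}α‖]`, so
the neighbour satisfies `{q''α} ≤ {q'α} + d** + ‖q_{k+1}α‖`. Therefore the intersection
`[{q''α} - d**, {q'α} + d*)` has length at least `‖q_kα‖ - ‖q_{k+1}α‖ ≥ ‖q_{k+2}α‖`, while both
gaps of `A_{k+8}(α)` are at most `‖q_{k+7}α‖`. Finally the points `{qα}`, `1 ≤ q ≤ q_{k+9} - 2`,
leave no gap longer than `4‖q_{k+7}α‖` in `(0, 1)`: walk from `0` by an index `e ≤ q_{k+8}` with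
`{eα} ∈ [‖q_{k+7}α‖, ‖q_{k+7}α‖ + ‖q_{k+8}α‖]`, subtracting `q_{k+9}` whenever the index leaves the
range, which moves the point by only `‖q_{k+9}α‖`. Some `{qα}` thus lies at distance `≥ d**₈`
from the left end and `≥ d*₈` from the right end of the intersection.
-/

/-- `q_k`: the denominators of the continued fraction convergents of `α`. -/
noncomputable def cfq (α : ℝ) (k : ℕ) : ℝ := (GenContFract.of α).dens k

/-- `a_k`: the continued fraction digits (partial quotients) of `α`, for `k ≥ 1`. -/
noncomputable def cfa (α : ℝ) (k : ℕ) : ℝ :=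
  ((GenContFract.of α).partDens.get? (k - 1)).getD 0

/-- `‖y‖`: the distance from `y` to the nearest integer. -/
noncomputable def nearestIntDist (y : ℝ) : ℝ := |y - round y|

namespace IrrationalRotation

open GenContFract

variable {α : ℝ}

-- `q_n`, `p_n`, `ε_n = q_nα - p_n` and `‖q_nα‖ = |ε_n|`; the floors are exact (`cast_den`).
noncomputable def den (α : ℝ) (n : ℕ) : ℤ := ⌊cfq α n⌋

noncomputable def num (α : ℝ) (n : ℕ) : ℤ := ⌊(GenContFract.of α).nums n⌋

noncomputable def err (α : ℝ) (n : ℕ) : ℝ := den α n * α - num α n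

noncomputable def absErr (α : ℝ) (n : ℕ) : ℝ := |err α n|

theorem not_terminatedAt (hα : Irrational α) (n : ℕ) : ¬(GenContFract.of α).TerminatedAt n :=
  fun h ↦ by
    obtain ⟨q, hq⟩ := (terminates_iff_rat α).1 ⟨n, h⟩
    exact hα ⟨q, hq.symm⟩

theorem exists_s_get? (hα : Irrational α) (n : ℕ) :
    ∃ b : ℤ, 1 ≤ b ∧ (GenContFract.of α).s.get? n = some ⟨1, b⟩ := by
  obtain ⟨gp, hgp⟩ := Option.ne_none_iff_exists'.1 (not_terminatedAt hα n)
  obtain ⟨ha, b, hb⟩ := of_partNum_eq_one_and_exists_int_partDen_eq hgp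
  have hb1 : (1 : ℝ) ≤ b := hb ▸ of_one_le_get?_partDen (partDen_eq_s_b hgp)
  exact ⟨b, mod_cast hb1, by rw [hgp, ← ha, ← hb]⟩

theorem exists_int_contsAux (hα : Irrational α) :
    ∀ n, ∃ a b : ℤ, (GenContFract.of α).contsAux n = ⟨a, b⟩
  | 0 => ⟨1, 0, by simp [contsAux]⟩
  | 1 => ⟨⌊α⌋, 1, by simp [contsAux, of_h_eq_floor]⟩
  | n + 2 => by
    obtain ⟨b, -, hs⟩ := exists_s_get? hα n
    obtain ⟨a₀, b₀, h₀⟩ := exists_int_contsAux hα n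
    obtain ⟨a₁, b₁, h₁⟩ := exists_int_contsAux hα (n + 1)
    refine ⟨b * a₁ + a₀, b * b₁ + b₀, ?_⟩
    rw [contsAux_recurrence hs h₀ h₁]
    push_cast
    ring_nf

theorem cast_den (hα : Irrational α) (n : ℕ) : (den α n : ℝ) = cfq α n := by
  obtain ⟨a, b, h⟩ := exists_int_contsAux hα (n + 1)
  rw [den, cfq, den_eq_conts_b, nth_cont_eq_succ_nth_contAux, h, Int.floor_intCast]

theorem cast_num (hα : Irrational α) (n : ℕ) : (num α n : ℝ) = (GenContFract.of α).nums n := by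
  obtain ⟨a, b, h⟩ := exists_int_contsAux hα (n + 1)
  rw [num, num_eq_conts_a, nth_cont_eq_succ_nth_contAux, h, Int.floor_intCast]

theorem den_num_recurrence (hα : Irrational α) (n : ℕ) :
    ∃ b : ℤ, 1 ≤ b ∧ den α (n + 2) = b * den α (n + 1) + den α n ∧
      num α (n + 2) = b * num α (n + 1) + num α n := by
  obtain ⟨b, hb, hs⟩ := exists_s_get? hα (n + 1)
  refine ⟨b, hb, ?_, ?_⟩
  · have := dens_recurrence hs rfl rfl
    rw [← cfq, ← cfq, ← cfq, ← cast_den hα, ← cast_den hα, ← cast_den hα] at this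
    simp only [one_mul] at this
    exact_mod_cast this
  · have := nums_recurrence hs rfl rfl
    rw [← cast_num hα, ← cast_num hα, ← cast_num hα] at this
    simp only [one_mul] at this
    exact_mod_cast this

theorem err_add_two (hα : Irrational α) (n : ℕ) :
    ∃ b : ℤ, 1 ≤ b ∧ err α (n + 2) = b * err α (n + 1) + err α n := by
  obtain ⟨b, hb, hd, hn⟩ := den_num_recurrence hα n
  refine ⟨b, hb, ?_⟩
  simp only [err, hd, hn]
  push_cast
  ring

theorem one_le_den (hα : Irrational α) (n : ℕ) : 1 ≤ den α n := by
  have h := succ_nth_fib_le_of_nth_den (v := α) (n := n) (Or.inr (not_terminatedAt hα _))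
  have : (1 : ℝ) ≤ den α n := by
    rw [cast_den hα]
    exact le_trans (mod_cast Nat.fib_pos.2 n.succ_pos) h
  exact_mod_cast this

theorem den_mono (hα : Irrational α) : Monotone (den α) :=
  monotone_nat_of_le_succ fun n ↦ by
    have : (den α n : ℝ) ≤ den α (n + 1) := by
      rw [cast_den hα, cast_den hα]
      exact of_den_mono
    exact_mod_cast this

theorem den_succ_add_den_le (hα : Irrational α) (n : ℕ) :
    den α (n + 1) + den α n ≤ den α (n + 2) := by
  obtain ⟨b, hb, hd, -⟩ := den_num_recurrence hα n
  nlinarith [one_le_den hα (n + 1)]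

theorem two_le_den (hα : Irrational α) {n : ℕ} (hn : 2 ≤ n) : 2 ≤ den α n := by
  have : den α 1 + den α 0 ≤ den α 2 := den_succ_add_den_le hα 0
  have := one_le_den hα 0
  have := one_le_den hα 1
  have := den_mono hα hn
  omega

theorem den_add_two_le (hα : Irrational α) {n : ℕ} (hn : 3 ≤ n) : den α n + 2 ≤ den α (n + 1) := by
  obtain ⟨m, rfl⟩ := Nat.exists_eq_add_of_le' (show 1 ≤ n by omega)
  show den α (m + 1) + 2 ≤ den α (m + 2)
  have : den α (m + 1) + den α m ≤ den α (m + 2) := den_succ_add_den_le hα m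
  have := two_le_den hα (show 2 ≤ m by omega)
  omega

theorem exists_stream_fr_mem_Ioo (hα : Irrational α) (n : ℕ) :
    ∃ ifp, IntFractPair.stream α n = some ifp ∧ ifp.fr ∈ Set.Ioo 0 1 := by
  have h := not_terminatedAt hα n
  rw [of_terminatedAt_n_iff_succ_nth_intFractPair_stream_eq_none] at h
  obtain ⟨ifp', hifp'⟩ := Option.ne_none_iff_exists'.1 h
  obtain ⟨ifp, hs, hfr, -⟩ := IntFractPair.succ_nth_stream_eq_some_iff.1 hifp'
  exact ⟨ifp, hs, (IntFractPair.nth_stream_fr_nonneg hs).lt_of_ne' hfr,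
    IntFractPair.nth_stream_fr_lt_one hs⟩

theorem neg_one_pow_sq {R : Type*} [Monoid R] [HasDistribNeg R] (n : ℕ) :
    ((-1 : R) ^ n) ^ 2 = 1 := by
  rw [← pow_mul, mul_comm, pow_mul, neg_one_sq, one_pow]

theorem neg_one_pow_mul_err_mem_Ioo (hα : Irrational α) (n : ℕ) :
    (-1) ^ n * err α n ∈ Set.Ioo 0 1 := by
  obtain ⟨ifp, hs, hfr0, hfr1⟩ := exists_stream_fr_mem_Ioo hα n
  have hsub := sub_convs_eq hs
  set g := GenContFract.of α
  set B := (g.contsAux (n + 1)).b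
  set pB := (g.contsAux n).b
  have hBden : g.dens n = B := by rw [den_eq_conts_b, nth_cont_eq_succ_nth_contAux]
  have hB : 1 ≤ B := by rw [← hBden, ← cfq, ← cast_den hα]; exact_mod_cast one_le_den hα n
  have hpB : 0 ≤ pB := zero_le_of_contsAux_b
  have hD : 1 < ifp.fr⁻¹ * B + pB := by nlinarith [(one_lt_inv₀ hfr0).2 hfr1]
  have herr : err α n = B * (α - g.convs n) := by
    rw [err, cast_den hα, cast_num hα, cfq, conv_eq_num_div_den, hBden]
    field_simp
    ring
  have key : (-1) ^ n * err α n = 1 / (ifp.fr⁻¹ * B + pB) := by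
    rw [herr, hsub, if_neg hfr0.ne', mul_div_assoc', mul_div_mul_left _ _ (by positivity),
      mul_div_assoc', ← sq, neg_one_pow_sq]
  rw [key]
  exact ⟨by positivity, (div_lt_one (by linarith)).2 hD⟩

theorem absErr_eq (hα : Irrational α) (n : ℕ) : absErr α n = (-1) ^ n * err α n := by
  rw [absErr, ← abs_of_pos (neg_one_pow_mul_err_mem_Ioo hα n).1, abs_mul, abs_neg_one_pow,
    one_mul]

theorem absErr_pos (hα : Irrational α) (n : ℕ) : 0 < absErr α n :=
  absErr_eq hα n ▸ (neg_one_pow_mul_err_mem_Ioo hα n).1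

theorem absErr_lt_one (hα : Irrational α) (n : ℕ) : absErr α n < 1 :=
  absErr_eq hα n ▸ (neg_one_pow_mul_err_mem_Ioo hα n).2

theorem err_mul_err_succ_neg (hα : Irrational α) (n : ℕ) : err α n * err α (n + 1) < 0 := by
  have h₀ := absErr_pos hα n
  have h₁ := absErr_pos hα (n + 1)
  rw [absErr_eq hα] at h₀ h₁
  rw [pow_succ] at h₁
  nlinarith [neg_one_pow_sq (R := ℝ) n]

theorem absErr_succ_add_absErr_le (hα : Irrational α) (n : ℕ) :
    absErr α (n + 1) + absErr α (n + 2) ≤ absErr α n := by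
  obtain ⟨b, hb, hrec⟩ := err_add_two hα n
  have key : absErr α n = absErr α (n + 2) + b * absErr α (n + 1) := by
    rw [absErr_eq hα, absErr_eq hα, absErr_eq hα, pow_succ, pow_succ, hrec]
    ring
  have : (1 : ℝ) ≤ b := mod_cast hb
  nlinarith [absErr_pos hα (n + 1)]

theorem absErr_succ_lt (hα : Irrational α) (n : ℕ) : absErr α (n + 1) < absErr α n := by
  linarith [absErr_succ_add_absErr_le hα n, absErr_pos hα (n + 2)]

theorem fib_mul_absErr_le (hα : Irrational α) (n m : ℕ) :
    Nat.fib (m + 1) * absErr α (n + m) + Nat.fib m * absErr α (n + m + 1) ≤ absErr α n := by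
  induction m with
  | zero => simp
  | succ m ih =>
    have hrec := absErr_succ_add_absErr_le hα (n + m)
    have hfib : (0 : ℝ) ≤ Nat.fib (m + 1) := Nat.cast_nonneg _
    rw [Nat.fib_add_two, Nat.cast_add, ← add_assoc]
    nlinarith [mul_le_mul_of_nonneg_left hrec hfib]

theorem num_mul_den_succ_sub (hα : Irrational α) (n : ℕ) :
    num α n * den α (n + 1) - den α n * num α (n + 1) = (-1) ^ (n + 1) := by
  have h := SimpContFract.determinant (s := SimpContFract.of α) (not_terminatedAt hα n)
  rw [SimpContFract.of, ← cast_num hα, ← cast_num hα, ← cfq, ← cfq, ← cast_den hα,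
    ← cast_den hα] at h
  exact_mod_cast h

theorem exists_int_combination (hα : Irrational α) (n : ℕ) (c m : ℤ) :
    ∃ x y : ℤ, c = x * den α n + y * den α (n + 1) ∧
      (c : ℝ) * α - m = x * err α n + y * err α (n + 1) := by
  have hdet := num_mul_den_succ_sub hα n
  have hsq := neg_one_pow_sq (R := ℤ) (n + 1)
  set Δ : ℤ := (-1) ^ (n + 1)
  have hc : c = Δ * (m * den α (n + 1) - c * num α (n + 1)) * den α n +
      Δ * (c * num α n - m * den α n) * den α (n + 1) := by
    linear_combination (-Δ * c) * hdet - c * hsq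
  have hm : m = Δ * (m * den α (n + 1) - c * num α (n + 1)) * num α n +
      Δ * (c * num α n - m * den α n) * num α (n + 1) := by
    linear_combination (-Δ * m) * hdet - m * hsq
  refine ⟨_, _, hc, ?_⟩
  rw [err, err]
  conv_lhs => rw [hc, hm]
  push_cast
  ring

theorem abs_le_abs_add_of_mul_nonneg {R : Type*} [CommRing R] [LinearOrder R]
    [IsStrictOrderedRing R] {a b : R} (h : 0 ≤ a * b) : |a| ≤ |a + b| :=
  sq_le_sq.1 (by nlinarith [sq_nonneg b])

theorem absErr_le_abs_mul_sub (hα : Irrational α) (n : ℕ) {c : ℤ} (hc : c ≠ 0)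
    (hlt : |c| < den α (n + 1)) (m : ℤ) : absErr α n ≤ |c * α - m| := by
  -- `|c| < q_{n+1}` forces `x ≠ 0` and `xy ≤ 0`, so `xε_n` and `yε_{n+1}` have the same sign.
  obtain ⟨x, y, hcxy, hxy⟩ := exists_int_combination hα n c m
  have hq₀ := one_le_den hα n
  have hq₁ := one_le_den hα (n + 1)
  have hx : x ≠ 0 := by
    rintro rfl
    have hy : y ≠ 0 := by rintro rfl; simp only [zero_mul, add_zero] at hcxy; exact hc hcxy
    have : den α (n + 1) ≤ |c| := by
      rw [hcxy, zero_mul, zero_add, abs_mul, abs_of_pos (by omega : 0 < den α (n + 1))]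
      nlinarith [Int.one_le_abs hy]
    omega
  have hxy₀ : (x * y : ℝ) ≤ 0 := by
    suffices x * y ≤ 0 by exact_mod_cast this
    by_contra! h
    rcases pos_and_pos_or_neg_and_neg_of_mul_pos h with ⟨hx, hy⟩ | ⟨hx, hy⟩
    · nlinarith [le_abs_self c]
    · nlinarith [neg_abs_le c]
  have hsame : 0 ≤ x * err α n * (y * err α (n + 1)) := by
    rw [show x * err α n * (y * err α (n + 1)) = (x * y : ℝ) * (err α n * err α (n + 1)) by ring]
    exact mul_nonneg_of_nonpos_of_nonpos hxy₀ (err_mul_err_succ_neg hα n).le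
  calc absErr α n ≤ |(x : ℝ)| * absErr α n :=
        le_mul_of_one_le_left (abs_nonneg _) (mod_cast Int.one_le_abs hx)
    _ = |x * err α n| := (abs_mul _ _).symm
    _ ≤ |x * err α n + y * err α (n + 1)| := abs_le_abs_add_of_mul_nonneg hsame
    _ = |c * α - m| := by rw [hxy]

theorem absErr_le_fract (hα : Irrational α) (n : ℕ) {c : ℤ} (hc : c ≠ 0)
    (hlt : |c| < den α (n + 1)) :
    absErr α n ≤ Int.fract (c * α) ∧ absErr α n ≤ 1 - Int.fract (c * α) := by
  constructor
  · have h := absErr_le_abs_mul_sub hα n hc hlt ⌊c * α⌋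
    rwa [← Int.fract, abs_of_nonneg (Int.fract_nonneg _)] at h
  · have h := absErr_le_abs_mul_sub hα n hc hlt (⌊c * α⌋ + 1)
    rwa [Int.cast_add, Int.cast_one, ← sub_sub, ← Int.fract, abs_sub_comm,
      abs_of_nonneg (by linarith [Int.fract_lt_one ((c : ℝ) * α)])] at h

theorem err_pos_and_succ_neg_or_neg_and_succ_pos (hα : Irrational α) (n : ℕ) :
    0 < err α n ∧ err α (n + 1) < 0 ∨ err α n < 0 ∧ 0 < err α (n + 1) :=
  mul_neg_iff.1 (err_mul_err_succ_neg hα n)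

theorem fract_den_mul_of_err_pos (hα : Irrational α) {n : ℕ} (h : 0 < err α n) :
    Int.fract (den α n * α) = absErr α n := by
  have h1 := absErr_lt_one hα n
  rw [absErr, abs_of_pos h] at h1 ⊢
  exact Int.fract_eq_iff.2 ⟨h.le, h1, num α n, by rw [err]; ring⟩

theorem one_sub_fract_den_mul_of_err_neg (hα : Irrational α) {n : ℕ} (h : err α n < 0) :
    1 - Int.fract (den α n * α) = absErr α n := by
  have h1 := absErr_lt_one hα n
  rw [absErr, abs_of_neg h] at h1 ⊢
  rw [(Int.fract_eq_iff (b := 1 + err α n)).2 ⟨by linarith, by linarith, num α n - 1,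
    by push_cast; rw [err]; ring⟩]
  ring

theorem exists_fract_le_absErr (hα : Irrational α) (n : ℕ) :
    ∃ q : ℤ, 1 ≤ q ∧ q ≤ den α (n + 1) ∧ Int.fract (q * α) ≤ absErr α n := by
  rcases err_pos_and_succ_neg_or_neg_and_succ_pos hα n with ⟨h, -⟩ | ⟨-, h⟩
  · exact ⟨den α n, one_le_den hα n, den_mono hα n.le_succ,
      (fract_den_mul_of_err_pos hα h).le⟩
  · exact ⟨den α (n + 1), one_le_den hα _, le_rfl,
      (fract_den_mul_of_err_pos hα h).trans_le (absErr_succ_lt hα n).le⟩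

theorem exists_one_sub_fract_le_absErr (hα : Irrational α) (n : ℕ) :
    ∃ q : ℤ, 1 ≤ q ∧ q ≤ den α (n + 1) ∧ 1 - Int.fract (q * α) ≤ absErr α n := by
  rcases err_pos_and_succ_neg_or_neg_and_succ_pos hα n with ⟨-, h⟩ | ⟨h, -⟩
  · exact ⟨den α (n + 1), one_le_den hα _, le_rfl,
      (one_sub_fract_den_mul_of_err_neg hα h).trans_le (absErr_succ_lt hα n).le⟩
  · exact ⟨den α n, one_le_den hα n, den_mono hα n.le_succ,
      (one_sub_fract_den_mul_of_err_neg hα h).le⟩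

theorem absErr_add_absErr_succ_lt_one (hα : Irrational α) {n : ℕ} (hn : 1 ≤ n) :
    absErr α n + absErr α (n + 1) < 1 := by
  obtain ⟨m, rfl⟩ := Nat.exists_eq_add_of_le' hn
  exact (absErr_succ_add_absErr_le hα m).trans_lt (absErr_lt_one hα m)

theorem exists_fract_mem_Icc_absErr (hα : Irrational α) {n : ℕ} (hn : 3 ≤ n) :
    ∃ e : ℤ, 2 ≤ e ∧ e ≤ den α (n + 1) ∧
      Int.fract (e * α) ∈ Set.Icc (absErr α n) (absErr α n + absErr α (n + 1)) := by
  have h2 := den_add_two_le hα hn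
  rcases err_pos_and_succ_neg_or_neg_and_succ_pos hα n with ⟨h, -⟩ | ⟨h₀, h₁⟩
  · refine ⟨den α n, two_le_den hα (by omega), by omega, ?_⟩
    rw [fract_den_mul_of_err_pos hα h]
    exact ⟨le_rfl, le_add_of_nonneg_right (absErr_pos hα _).le⟩
  · refine ⟨den α (n + 1) - den α n, by omega, by linarith [one_le_den hα n], ?_⟩
    have hsum := absErr_add_absErr_succ_lt_one hα (show 1 ≤ n by omega)
    rw [absErr, absErr, abs_of_neg h₀, abs_of_pos h₁] at hsum ⊢
    rw [(Int.fract_eq_iff (b := err α (n + 1) - err α n)).2 ⟨by linarith, by linarith,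
      num α (n + 1) - num α n, by push_cast; rw [err, err]; ring⟩]
    constructor <;> linarith

section Walk

variable {δ η : ℝ} {N e : ℤ}

theorem exists_step (he : 0 ≤ e) (heN : e ≤ N - 2) (hδ : ∃ z : ℤ, e * α - δ = z)
    (hη : ∃ z : ℤ, N * α - η = z) (hηδ : |η| ≤ δ) {w : ℤ} (hw : -1 ≤ w) (hwN : w ≤ N - 2)
    (h1 : Int.fract (w * α) + δ + |η| < 1) :
    ∃ w' : ℤ, -1 ≤ w' ∧ w' ≤ N - 2 ∧ Int.fract (w * α) + δ - |η| ≤ Int.fract (w' * α) ∧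
      Int.fract (w' * α) ≤ Int.fract (w * α) + δ + |η| := by
  obtain ⟨ze, hze⟩ := hδ
  obtain ⟨zN, hzN⟩ := hη
  have hw' := Int.self_sub_fract ((w : ℝ) * α)
  have hτ := Int.fract_nonneg ((w : ℝ) * α)
  have hη₁ := le_abs_self η
  have hη₂ := neg_abs_le η
  by_cases hwe : w + e ≤ N - 2
  · have hfr : Int.fract (((w + e : ℤ) : ℝ) * α) = Int.fract (w * α) + δ :=
      Int.fract_eq_iff.2 ⟨by linarith, by linarith, ⌊w * α⌋ + ze,
        by push_cast; linear_combination hw' + hze⟩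
    refine ⟨w + e, by omega, hwe, ?_⟩
    rw [hfr]
    constructor <;> linarith
  · have hfr : Int.fract (((w + e - N : ℤ) : ℝ) * α) = Int.fract (w * α) + δ - η :=
      Int.fract_eq_iff.2 ⟨by linarith, by linarith, ⌊w * α⌋ + ze - zN,
        by push_cast; linear_combination hw' + hze - hzN⟩
    refine ⟨w + e - N, by omega, by omega, ?_⟩
    rw [hfr]
    constructor <;> linarith

theorem exists_fract_mem_Icc_of_step (he : 2 ≤ e) (heN : e ≤ N - 2)
    (hδ : ∃ z : ℤ, e * α - δ = z) (hη : ∃ z : ℤ, N * α - η = z) (hηδ : |η| < δ)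
    {L R : ℝ} (hL : 0 < L) (hR : R < 1) (hLR : L + 2 * (δ + |η|) ≤ R) :
    ∃ q : ℤ, 1 ≤ q ∧ q ≤ N - 2 ∧ Int.fract (q * α) ∈ Set.Icc L R := by
  suffices H : ∀ m : ℕ, ∀ w : ℤ, -1 ≤ w → w ≤ N - 2 → Int.fract (w * α) < L →
      L - Int.fract (w * α) ≤ m * (δ - |η|) →
      ∃ q : ℤ, 1 ≤ q ∧ q ≤ N - 2 ∧ Int.fract (q * α) ∈ Set.Icc L R by
    obtain ⟨m, hm⟩ := exists_nat_ge (L / (δ - |η|))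
    refine H m 0 (by omega) (by omega) (by simpa using hL) ?_
    simpa using (div_le_iff₀ (by linarith)).1 hm
  intro m
  induction m with
  | zero =>
    intro w _ _ hlt hle
    simp only [CharP.cast_eq_zero, zero_mul] at hle
    linarith
  | succ m ih =>
    intro w hw hwN hlt hle
    obtain ⟨w', hw', hw'N, hlo, hhi⟩ :=
      exists_step (by omega) heN hδ hη hηδ.le hw hwN (by linarith [abs_nonneg η])
    rcases lt_or_ge (Int.fract (w' * α)) L with hlt' | hge
    · refine ih w' hw' hw'N hlt' ?_
      push_cast at hle
      linarith
    obtain rfl | rfl | hpos : w' = -1 ∨ w' = 0 ∨ 1 ≤ w' := by omega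
    · -- the walk reached `q = -1`; one more step of `e` lands on the admissible index `e - 1`
      obtain ⟨ze, hze⟩ := hδ
      have hy := Int.self_sub_fract (((-1 : ℤ) : ℝ) * α)
      have hfr : Int.fract (((e - 1 : ℤ) : ℝ) * α) = Int.fract (((-1 : ℤ) : ℝ) * α) + δ :=
        Int.fract_eq_iff.2 ⟨by linarith, by linarith, ze + ⌊((-1 : ℤ) : ℝ) * α⌋,
          by push_cast at hy ⊢; linear_combination hy + hze⟩
      refine ⟨e - 1, by omega, by omega, ?_⟩
      rw [hfr]
      constructor <;> linarith
    · rw [Int.cast_zero, zero_mul, Int.fract_zero] at hge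
      linarith
    · exact ⟨w', hpos, hw'N, hge, by linarith [abs_nonneg η]⟩

end Walk

theorem exists_fract_mem_Icc (hα : Irrational α) {n : ℕ} (hn : 3 ≤ n) {L R : ℝ} (hL : 0 < L)
    (hR : R < 1) (hLR : L + 4 * absErr α n ≤ R) :
    ∃ q : ℤ, 1 ≤ q ∧ q ≤ den α (n + 2) - 2 ∧ Int.fract (q * α) ∈ Set.Icc L R := by
  obtain ⟨e, he, heN, hlo, hhi⟩ := exists_fract_mem_Icc_absErr hα hn
  have hden : den α (n + 1) + 2 ≤ den α (n + 2) := den_add_two_le hα (by omega)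
  have hchain := absErr_succ_add_absErr_le hα n
  have hlt := absErr_succ_lt hα (n + 1)
  have hpos := absErr_pos hα (n + 2)
  exact exists_fract_mem_Icc_of_step he (by omega) ⟨⌊e * α⌋, Int.self_sub_fract _⟩
    (η := err α (n + 2)) ⟨num α (n + 2), by rw [err]; ring⟩ (by rw [← absErr]; linarith)
    hL hR (by rw [← absErr]; linarith)

-- With `N = q_{k+1}`, the least elements are the lengths `d**` and `d*` of `A_k(α)`.
def lowerGaps (α N : ℝ) : Set ℝ :=
  {x | ∃ q : ℤ, -1 ≤ q ∧ (q : ℝ) ≤ N - 2 ∧ q ≠ 0 ∧ Int.fract ((q : ℝ) * α) = x}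

def upperGaps (α N : ℝ) : Set ℝ :=
  {x | ∃ q : ℤ, -1 ≤ q ∧ (q : ℝ) ≤ N - 2 ∧ q ≠ 0 ∧ 1 - Int.fract ((q : ℝ) * α) = x}

theorem cast_le_cfq_sub_two_iff (hα : Irrational α) {q : ℤ} {n : ℕ} :
    (q : ℝ) ≤ cfq α n - 2 ↔ q ≤ den α n - 2 := by
  rw [← cast_den hα]
  exact_mod_cast Iff.rfl

theorem abs_lt_den_of_le_cfq_sub_two (hα : Irrational α) {q : ℤ} {n : ℕ} (hn : 2 ≤ n)
    (hq : -1 ≤ q) (hqN : (q : ℝ) ≤ cfq α n - 2) : |q| < den α n := by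
  rw [cast_le_cfq_sub_two_iff hα] at hqN
  have := two_le_den hα hn
  exact abs_lt.2 ⟨by omega, by omega⟩

theorem absErr_le_of_mem_lowerGaps (hα : Irrational α) {n : ℕ} (hn : 1 ≤ n) {x : ℝ}
    (hx : x ∈ lowerGaps α (cfq α (n + 1))) : absErr α n ≤ x := by
  obtain ⟨q, hq, hqN, hq0, rfl⟩ := hx
  exact (absErr_le_fract hα n hq0 (abs_lt_den_of_le_cfq_sub_two hα (by omega) hq hqN)).1

theorem absErr_le_of_mem_upperGaps (hα : Irrational α) {n : ℕ} (hn : 1 ≤ n) {x : ℝ}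
    (hx : x ∈ upperGaps α (cfq α (n + 1))) : absErr α n ≤ x := by
  obtain ⟨q, hq, hqN, hq0, rfl⟩ := hx
  exact (absErr_le_fract hα n hq0 (abs_lt_den_of_le_cfq_sub_two hα (by omega) hq hqN)).2

theorem le_absErr_of_isLeast_lowerGaps (hα : Irrational α) {n : ℕ} (hn : 2 ≤ n) {d : ℝ}
    (hd : IsLeast (lowerGaps α (cfq α (n + 2))) d) : d ≤ absErr α n := by
  obtain ⟨q, hq, hqN, hfr⟩ := exists_fract_le_absErr hα n
  have : den α (n + 1) + 2 ≤ den α (n + 2) := den_add_two_le hα (by omega)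
  exact (hd.2 ⟨q, by omega, (cast_le_cfq_sub_two_iff hα).2 (by omega), by omega, rfl⟩).trans hfr

theorem le_absErr_of_isLeast_upperGaps (hα : Irrational α) {n : ℕ} (hn : 2 ≤ n) {d : ℝ}
    (hd : IsLeast (upperGaps α (cfq α (n + 2))) d) : d ≤ absErr α n := by
  obtain ⟨q, hq, hqN, hfr⟩ := exists_one_sub_fract_le_absErr hα n
  have : den α (n + 1) + 2 ≤ den α (n + 2) := den_add_two_le hα (by omega)
  exact (hd.2 ⟨q, by omega, (cast_le_cfq_sub_two_iff hα).2 (by omega), by omega, rfl⟩).trans hfr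

/-- With `d = {sα}`, the point `{(q' + s)α} = {q'α} + d` (or `{q'α} + d - ε_{n+1}` once the index
is reduced by `q_{n+1}`) would otherwise lie strictly between `{q'α}` and `v`. -/
theorem le_fract_add_of_forall_notMem_Ioo (hα : Irrational α) {n : ℕ} (hn : 1 ≤ n) {d v : ℝ}
    {q' : ℤ} (hd : IsLeast (lowerGaps α (cfq α (n + 1))) d) (hq' : 0 ≤ q')
    (hq'N : (q' : ℝ) ≤ cfq α (n + 1) - 2) (hv : v < 1)
    (hempty : ∀ q : ℤ, -1 ≤ q → (q : ℝ) ≤ cfq α (n + 1) - 2 →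
      Int.fract ((q : ℝ) * α) ∉ Set.Ioo (Int.fract ((q' : ℝ) * α)) v) :
    v ≤ Int.fract ((q' : ℝ) * α) + d + absErr α (n + 1) := by
  by_contra! hgt
  obtain ⟨s, hs, hsN, -, hsd⟩ := hd.1
  have hdn := absErr_le_of_mem_lowerGaps hα hn hd.1
  have hlt := absErr_succ_lt hα n
  have hε₁ : err α (n + 1) ≤ absErr α (n + 1) := le_abs_self _
  have hε₂ : -absErr α (n + 1) ≤ err α (n + 1) := neg_abs_le _
  have hu := Int.self_sub_fract ((q' : ℝ) * α)
  have hs' := Int.self_sub_fract ((s : ℝ) * α)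
  rw [hsd] at hs'
  rw [cast_le_cfq_sub_two_iff hα] at hsN hq'N
  have hd₀ := (absErr_pos hα n).trans_le hdn
  have hu₀ := Int.fract_nonneg ((q' : ℝ) * α)
  by_cases hc : q' + s ≤ den α (n + 1) - 2
  · have hfr : Int.fract (((q' + s : ℤ) : ℝ) * α) = Int.fract ((q' : ℝ) * α) + d :=
      Int.fract_eq_iff.2 ⟨by linarith, by linarith [absErr_pos hα (n + 1)],
        ⌊(q' : ℝ) * α⌋ + ⌊(s : ℝ) * α⌋, by push_cast; linear_combination hu + hs'⟩
    refine hempty (q' + s) (by omega) ((cast_le_cfq_sub_two_iff hα).2 hc) ?_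
    rw [hfr]
    constructor <;> linarith [absErr_pos hα (n + 1)]
  · have hfr : Int.fract (((q' + s - den α (n + 1) : ℤ) : ℝ) * α) =
        Int.fract ((q' : ℝ) * α) + d - err α (n + 1) :=
      Int.fract_eq_iff.2 ⟨by linarith, by linarith [absErr_pos hα (n + 1)],
        ⌊(q' : ℝ) * α⌋ + ⌊(s : ℝ) * α⌋ - num α (n + 1), by
          push_cast; rw [err]; linear_combination hu + hs'⟩
    refine hempty (q' + s - den α (n + 1)) (by omega)
      ((cast_le_cfq_sub_two_iff hα).2 (by omega)) ?_
    rw [hfr]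
    constructor <;> linarith [absErr_pos hα (n + 1)]

end IrrationalRotation

open IrrationalRotation in
/-- `dss` and `dst` are the lengths `d**` and `d*` of the partition `A_k(α)`, so that
`J_k(q) = [{qα} - dss, {qα} + dst)`; `dss8`, `dst8` are those of `A_{k+8}(α)`. -/
theorem stmt11 (α : ℝ) (hα : Irrational α)
    (k : ℕ) (hk : 1 ≤ k) (dst dss dst8 dss8 : ℝ)
    (hdss : IsLeast {x : ℝ | ∃ q : ℤ, -1 ≤ q ∧ (q : ℝ) ≤ cfq α (k + 1) - 2 ∧ q ≠ 0 ∧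
      Int.fract ((q : ℝ) * α) = x} dss)
    (hdst : IsLeast {x : ℝ | ∃ q : ℤ, -1 ≤ q ∧ (q : ℝ) ≤ cfq α (k + 1) - 2 ∧ q ≠ 0 ∧
      1 - Int.fract ((q : ℝ) * α) = x} dst)
    (hdss8 : IsLeast {x : ℝ | ∃ q : ℤ, -1 ≤ q ∧ (q : ℝ) ≤ cfq α (k + 9) - 2 ∧ q ≠ 0 ∧
      Int.fract ((q : ℝ) * α) = x} dss8)
    (hdst8 : IsLeast {x : ℝ | ∃ q : ℤ, -1 ≤ q ∧ (q : ℝ) ≤ cfq α (k + 9) - 2 ∧ q ≠ 0 ∧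
      1 - Int.fract ((q : ℝ) * α) = x} dst8)
    (q' q'' : ℤ) (hq'1 : 1 ≤ q') (hq'2 : (q' : ℝ) ≤ cfq α (k + 1) - 2)
    (hq''1 : 1 ≤ q'') (hq''2 : (q'' : ℝ) ≤ cfq α (k + 1) - 2)
    (horder : Int.fract ((q' : ℝ) * α) < Int.fract ((q'' : ℝ) * α))
    (hneighbor : ∀ q : ℤ, -1 ≤ q → (q : ℝ) ≤ cfq α (k + 1) - 2 →
      Int.fract ((q : ℝ) * α) ∉ Set.Ioo (Int.fract ((q' : ℝ) * α)) (Int.fract ((q'' : ℝ) * α))) :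
    ∃ q : ℤ, 1 ≤ q ∧ (q : ℝ) ≤ cfq α (k + 9) - 2 ∧
      Set.Ico (Int.fract ((q : ℝ) * α) - dss8) (Int.fract ((q : ℝ) * α) + dst8) ⊆
        Set.Ico (Int.fract ((q' : ℝ) * α) - dss) (Int.fract ((q' : ℝ) * α) + dst) ∩
          Set.Ico (Int.fract ((q'' : ℝ) * α) - dss) (Int.fract ((q'' : ℝ) * α) + dst) := by
  set u := Int.fract ((q' : ℝ) * α)
  set v := Int.fract ((q'' : ℝ) * α)
  have hv : dss ≤ v := hdss.2 ⟨q'', by omega, hq''2, by omega, rfl⟩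
  have hu : dst ≤ 1 - u := hdst.2 ⟨q', by omega, hq'2, by omega, rfl⟩
  have hgap : v ≤ u + dss + absErr α (k + 1) :=
    le_fract_add_of_forall_notMem_Ioo hα hk hdss (by omega) hq'2 (Int.fract_lt_one _) hneighbor
  have hdst_ge : absErr α k ≤ dst := absErr_le_of_mem_upperGaps hα hk hdst.1
  have hdss8_pos :=
    (absErr_pos hα (k + 8)).trans_le (absErr_le_of_mem_lowerGaps hα (by omega) hdss8.1)
  have hdst8_pos :=
    (absErr_pos hα (k + 8)).trans_le (absErr_le_of_mem_upperGaps hα (by omega) hdst8.1)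
  have hdss8_le := le_absErr_of_isLeast_lowerGaps hα (n := k + 7) (by omega) hdss8
  have hdst8_le := le_absErr_of_isLeast_upperGaps hα (n := k + 7) (by omega) hdst8
  have hchain := absErr_succ_add_absErr_le hα k
  have hfib : 8 * absErr α (k + 7) + 5 * absErr α (k + 8) ≤ absErr α (k + 2) := by
    simpa [Nat.fib_add_two] using fib_mul_absErr_le hα (k + 2) 5
  obtain ⟨q, hq1, hq2, hqL, hqR⟩ := exists_fract_mem_Icc hα (n := k + 7) (by omega)
    (L := v - dss + dss8) (R := u + dst - dst8) (by linarith) (by linarith)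
    (by linarith [absErr_pos hα (k + 8), absErr_pos hα (k + 7)])
  exact ⟨q, hq1, (cast_le_cfq_sub_two_iff hα).2 hq2,
    Set.subset_inter (Set.Ico_subset_Ico (by linarith) (by linarith))
      (Set.Ico_subset_Ico (by linarith) (by linarith))⟩
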